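/- For a TFG element χ = (R,v,p,b^a,b^ω), conjugation g ↦ χ • g • χ⁻¹ is a group automorphism of the TFG (with gyroscope bias extension), and its differential at the identity is given by the block matrix Ad_χ whose diagonal blocks are all R and whose first block column is (R; (v)× R; (p)× R; R(b^a)×; R(b^ω)×), all other blocks zero. -/

import Mathlib

open Matrix

noncomputable section

abbrev V3 := Fin 3 → ℝ
abbrev M3 := Matrix (Fin 3) (Fin 3) ℝ

/-- The skew-symmetric cross-product matrix `(ξ)×`. -/
def skew (ξ : V3) : M3 :=
  !![0, -ξ 2, ξ 1; ξ 2, 0, -ξ 0; -ξ 1, ξ 0, 0]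

/-- The Euclidean norm of a vector of `ℝ³`. -/
def nrm (ξ : V3) : ℝ := Real.sqrt (ξ 0 ^ 2 + ξ 1 ^ 2 + ξ 2 ^ 2)

/-- The left Jacobian of SO(3):
`ν(ξ) = I + ((1−cos‖ξ‖)/‖ξ‖²)(ξ)× + ((‖ξ‖−sin‖ξ‖)/‖ξ‖³)(ξ)ײ`. -/
def nu (ξ : V3) : M3 :=
  1 + ((1 - Real.cos (nrm ξ)) / nrm ξ ^ 2) • skew ξ
    + ((nrm ξ - Real.sin (nrm ξ)) / nrm ξ ^ 3) • (skew ξ * skew ξ)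

/-- `R` is a rotation matrix: orthogonal with determinant one. -/
def IsSO3 (R : M3) : Prop := R * Rᵀ = 1 ∧ R.det = 1

/-- An element of the TFG with gyroscope bias: `(R, v, p, b^a, b^ω)`. -/
abbrev TFG5 := M3 × V3 × V3 × V3 × V3

/-- The TFG composition law with gyroscope bias. -/
def mul5 (x y : TFG5) : TFG5 :=
  (x.1 * y.1, x.2.1 + x.1 *ᵥ y.2.1, x.2.2.1 + x.1 *ᵥ y.2.2.1,
    y.2.2.2.1 + y.1ᵀ *ᵥ x.2.2.2.1, y.2.2.2.2 + y.1ᵀ *ᵥ x.2.2.2.2)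

/-- The TFG inverse with gyroscope bias. -/
def inv5 (x : TFG5) : TFG5 :=
  (x.1ᵀ, -(x.1ᵀ *ᵥ x.2.1), -(x.1ᵀ *ᵥ x.2.2.1),
    -(x.1 *ᵥ x.2.2.2.1), -(x.1 *ᵥ x.2.2.2.2))

/-- Conjugation `g ↦ χ • g • χ⁻¹` in the TFG with gyroscope bias. -/
def conj5 (χ g : TFG5) : TFG5 := mul5 (mul5 χ g) (inv5 χ)

/-- The TFG exponential with gyroscope bias. -/
def exp5 (ξ : V3 × V3 × V3 × V3 × V3) : TFG5 :=
  (NormedSpace.exp (skew ξ.1), nu ξ.1 *ᵥ ξ.2.1, nu ξ.1 *ᵥ ξ.2.2.1,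
    nu (-ξ.1) *ᵥ ξ.2.2.2.1, nu (-ξ.1) *ᵥ ξ.2.2.2.2)

/-!
Conjugation by `χ` is affine in `g`, with linear part `conj5Lin χ`, so its derivative along any
curve is `conj5Lin χ` applied to the velocity. The curve `t ↦ exp5 (t • ξ)` leaves the identity
with velocity `((ξ^R)×, ξ^v, ξ^p, ξ^{b^a}, ξ^{b^ω})`: the coefficients of `ν` are bounded, so
`ν (t • ξ^R) → 1`. Finally `R (ξ)× Rᵀ = (R ξ)×` for a rotation `R`, which turns
`conj5Lin χ` of that velocity into `Ad_χ ξ`. The automorphism part holds because `inv5 χ` is a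
two-sided inverse of `χ` as soon as `R` is orthogonal.
-/

open Filter Topology

section Prod

variable {𝕜 E F : Type*} [NontriviallyNormedField 𝕜] [NormedAddCommGroup E] [NormedSpace 𝕜 E]
  [NormedAddCommGroup F] [NormedSpace 𝕜 F] {f : 𝕜 → E × F} {f' : E × F} {x : 𝕜}

theorem HasDerivAt.fst (h : HasDerivAt f f' x) : HasDerivAt (fun t => (f t).1) f'.1 x :=
  (ContinuousLinearMap.fst 𝕜 E F).hasFDerivAt.comp_hasDerivAt x h

theorem HasDerivAt.snd (h : HasDerivAt f f' x) : HasDerivAt (fun t => (f t).2) f'.2 x :=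
  (ContinuousLinearMap.snd 𝕜 E F).hasFDerivAt.comp_hasDerivAt x h

end Prod

theorem hasDerivAt_smul_of_tendsto {E : Type*} [NormedAddCommGroup E] [NormedSpace ℝ E]
    {f : ℝ → E} {a : E} (h : Tendsto f (𝓝[≠] 0) (𝓝 a)) :
    HasDerivAt (fun t => t • f t) a 0 := by
  rw [hasDerivAt_iff_tendsto_slope_zero]
  refine h.congr' (eventually_nhdsWithin_of_forall fun t (ht : t ≠ 0) => ?_)
  simp [smul_smul, inv_mul_cancel₀ ht]

theorem Real.abs_one_sub_cos_div_sq_le (x : ℝ) : |(1 - Real.cos x) / x ^ 2| ≤ 1 / 2 := by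
  rcases eq_or_ne x 0 with rfl | hx
  · norm_num
  have hcos := Real.one_sub_sq_div_two_le_cos (x := x)
  rw [abs_div, abs_of_nonneg (by linarith [Real.cos_le_one x]), abs_of_nonneg (sq_nonneg x),
    div_le_iff₀ (by positivity)]
  linarith

theorem Real.abs_sub_sin_div_cube_le (x : ℝ) : |(x - Real.sin x) / x ^ 3| ≤ 1 / 6 := by
  rcases eq_or_ne x 0 with rfl | hx
  · norm_num
  rw [abs_div, abs_pow, div_le_iff₀ (by positivity)]
  linarith [Real.abs_sub_sin_le x]

theorem skew_smul (t : ℝ) (x : V3) : skew (t • x) = t • skew x := by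
  ext i j
  fin_cases i <;> fin_cases j <;> simp [skew]

theorem nu_smul (t : ℝ) (x : V3) :
    nu (t • x) = 1 + (t * ((1 - Real.cos (nrm (t • x))) / nrm (t • x) ^ 2)) • skew x
      + (t ^ 2 * ((nrm (t • x) - Real.sin (nrm (t • x))) / nrm (t • x) ^ 3))
        • (skew x * skew x) := by
  rw [nu, skew_smul, smul_mul_smul_comm, ← sq, smul_smul, smul_smul, mul_comm _ t,
    mul_comm _ (t ^ 2)]

theorem tendsto_nu_smul (x : V3) : Tendsto (fun t : ℝ => nu (t • x)) (𝓝 0) (𝓝 1) := by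
  -- the coefficients of `nu` are bounded, also at the junk value `nrm (0 • x) = 0`
  have bounded {g : ℝ → ℝ} {C : ℝ} (hg : ∀ t, |g t| ≤ C) :
      Tendsto (fun t : ℝ => t * g t) (𝓝 0) (𝓝 0) :=
    tendsto_id.zero_mul_isBoundedUnder_le (isBoundedUnder_of ⟨C, fun t => hg t⟩)
  have h₁ := bounded fun t => Real.abs_one_sub_cos_div_sq_le (nrm (t • x))
  have h₂ := ((tendsto_id (x := 𝓝 (0 : ℝ))).mul
    (bounded fun t => Real.abs_sub_sin_div_cube_le (nrm (t • x))))
  simp only [nu_smul]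
  simpa [← mul_assoc, ← sq, add_assoc] using
    (tendsto_const_nhds (x := (1 : M3))).add ((h₁.smul_const (skew x)).add
      (h₂.smul_const (skew x * skew x)))

theorem hasDerivAt_nu_smul_mulVec_smul (x b : V3) :
    HasDerivAt (fun t : ℝ => nu (t • x) *ᵥ (t • b)) b 0 := by
  simp only [mulVec_smul]
  apply hasDerivAt_smul_of_tendsto
  have hb : Tendsto (fun A : M3 => A *ᵥ b) (𝓝 1) (𝓝 b) := by
    simpa using (continuous_id.matrix_mulVec continuous_const).tendsto (1 : M3)
  exact (hb.comp (tendsto_nu_smul x)).mono_left nhdsWithin_le_nhds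

def one5 : TFG5 := (1, 0, 0, 0, 0)

theorem mul5_assoc (x y z : TFG5) : mul5 (mul5 x y) z = mul5 x (mul5 y z) := by
  simp [mul5, mulVec_add, mulVec_mulVec, transpose_mul, Matrix.mul_assoc, add_assoc]

theorem one5_mul5 (x : TFG5) : mul5 one5 x = x := by
  simp [mul5, one5]

theorem mul5_one5 (x : TFG5) : mul5 x one5 = x := by
  simp [mul5, one5]

theorem mul5_inv5 {x : TFG5} (hx : x.1 * x.1ᵀ = 1) : mul5 x (inv5 x) = one5 := by
  simp [mul5, inv5, one5, hx, mulVec_neg, mulVec_mulVec]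

theorem inv5_mul5 {x : TFG5} (hx : x.1 * x.1ᵀ = 1) : mul5 (inv5 x) x = one5 := by
  simp [mul5, inv5, one5, mul_eq_one_comm.mp hx, mulVec_neg, mulVec_mulVec]

theorem inv5_mul5_cancel_left {x : TFG5} (hx : x.1 * x.1ᵀ = 1) (y : TFG5) :
    mul5 (inv5 x) (mul5 x y) = y := by
  rw [← mul5_assoc, inv5_mul5 hx, one5_mul5]

theorem mul5_inv5_cancel_left {x : TFG5} (hx : x.1 * x.1ᵀ = 1) (y : TFG5) :
    mul5 x (mul5 (inv5 x) y) = y := by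
  rw [← mul5_assoc, mul5_inv5 hx, one5_mul5]

theorem conj5_mul5 {χ : TFG5} (hχ : χ.1 * χ.1ᵀ = 1) (g h : TFG5) :
    conj5 χ (mul5 g h) = mul5 (conj5 χ g) (conj5 χ h) := by
  simp only [conj5, mul5_assoc, inv5_mul5_cancel_left hχ]

theorem conj5_bijective {χ : TFG5} (hχ : χ.1 * χ.1ᵀ = 1) : Function.Bijective (conj5 χ) := by
  refine Function.bijective_iff_has_inverse.mpr ⟨fun g => mul5 (mul5 (inv5 χ) g) χ, ?_, ?_⟩
  · intro g
    simp only [conj5, mul5_assoc, inv5_mul5_cancel_left hχ, inv5_mul5 hχ, mul5_one5]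
  · intro g
    simp only [conj5, mul5_assoc, mul5_inv5_cancel_left hχ, mul5_inv5 hχ, mul5_one5]

theorem skew_transpose (x : V3) : (skew x)ᵀ = -skew x := by
  ext i j
  fin_cases i <;> fin_cases j <;> simp [skew]

theorem skew_mulVec_swap (x y : V3) : skew x *ᵥ y = -(skew y *ᵥ x) := by
  ext i
  fin_cases i <;> simp [skew, mulVec, dotProduct, Fin.sum_univ_three] <;> ring

theorem transpose_mul_skew_mulVec_mul (A : M3) (x : V3) :
    Aᵀ * skew (A *ᵥ x) * A = A.det • skew x := by
  ext i j
  fin_cases i <;> fin_cases j <;>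
    simp [Matrix.mul_apply, mulVec, dotProduct, skew, Fin.sum_univ_three, det_fin_three] <;> ring

theorem mul_skew_mul_transpose {R : M3} (hR : IsSO3 R) (x : V3) :
    R * skew x * Rᵀ = skew (R *ᵥ x) := by
  have h := transpose_mul_skew_mulVec_mul R x
  rw [hR.2, one_smul] at h
  rw [← h, ← Matrix.mul_assoc, ← Matrix.mul_assoc, hR.1, Matrix.one_mul, Matrix.mul_assoc,
    hR.1, Matrix.mul_one]

def hat5 (ξ : V3 × V3 × V3 × V3 × V3) : TFG5 := (skew ξ.1, ξ.2)

/-- The block matrix `Ad_χ` of the paper, acting on `ℝ¹⁵ = (ℝ³)⁵`. -/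
def Ad5 (χ : TFG5) (ξ : V3 × V3 × V3 × V3 × V3) : V3 × V3 × V3 × V3 × V3 :=
  (χ.1 *ᵥ ξ.1, skew χ.2.1 *ᵥ (χ.1 *ᵥ ξ.1) + χ.1 *ᵥ ξ.2.1,
    skew χ.2.2.1 *ᵥ (χ.1 *ᵥ ξ.1) + χ.1 *ᵥ ξ.2.2.1,
    χ.1 *ᵥ (skew χ.2.2.2.1 *ᵥ ξ.1) + χ.1 *ᵥ ξ.2.2.2.1,
    χ.1 *ᵥ (skew χ.2.2.2.2 *ᵥ ξ.1) + χ.1 *ᵥ ξ.2.2.2.2)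

def conj5Lin (χ : TFG5) : TFG5 →ₗ[ℝ] TFG5 where
  toFun η := (χ.1 * η.1 * χ.1ᵀ, χ.1 *ᵥ η.2.1 - (χ.1 * η.1 * χ.1ᵀ) *ᵥ χ.2.1,
    χ.1 *ᵥ η.2.2.1 - (χ.1 * η.1 * χ.1ᵀ) *ᵥ χ.2.2.1, χ.1 *ᵥ (η.2.2.2.1 + η.1ᵀ *ᵥ χ.2.2.2.1),
    χ.1 *ᵥ (η.2.2.2.2 + η.1ᵀ *ᵥ χ.2.2.2.2))
  map_add' η θ := by
    simp only [Prod.fst_add, Prod.snd_add, Matrix.mul_add, Matrix.add_mul, transpose_add,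
      mulVec_add, add_mulVec, Prod.mk_add_mk, Prod.mk.injEq, true_and]
    refine ⟨?_, ?_, ?_, ?_⟩ <;> abel
  map_smul' c η := by
    simp [mulVec_smul, smul_mulVec, mulVec_add, smul_sub]

theorem conj5_eq_add (χ g : TFG5) : conj5 χ g = conj5 χ 0 + conj5Lin χ g := by
  simp [conj5, mul5, inv5, conj5Lin, mulVec_neg, mulVec_add, mulVec_mulVec, sub_eq_add_neg,
    Matrix.mul_assoc, add_assoc]

theorem conj5Lin_hat5 {χ : TFG5} (hχ : IsSO3 χ.1) (ξ : V3 × V3 × V3 × V3 × V3) :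
    conj5Lin χ (hat5 ξ) = hat5 (Ad5 χ ξ) := by
  simp only [conj5Lin, hat5, Ad5, LinearMap.coe_mk, AddHom.coe_mk, mul_skew_mul_transpose hχ,
    skew_mulVec_swap (χ.1 *ᵥ ξ.1), skew_transpose, neg_mulVec, skew_mulVec_swap ξ.1, neg_neg,
    sub_neg_eq_add, mulVec_add, Prod.mk.injEq, true_and]
  exact ⟨add_comm _ _, add_comm _ _, add_comm _ _, add_comm _ _⟩

theorem Matrix.hasDerivAt_exp_smul {n : Type*} [Fintype n] [DecidableEq n] (M : Matrix n n ℝ) :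
    HasDerivAt (fun t : ℝ => NormedSpace.exp (t • M)) M 0 := by
  let _ := Matrix.linftyOpNormedRing (n := n) (α := ℝ)
  let _ := Matrix.linftyOpNormedAlgebra (R := ℝ) (n := n) (α := ℝ)
  have h := hasDerivAt_exp_smul_const (𝕂 := ℝ) M 0
  rwa [zero_smul, NormedSpace.exp_zero, one_mul] at h

section Differential

-- Any norm inducing the product topology on matrices would do here.
attribute [local instance] Matrix.normedAddCommGroup Matrix.normedSpace

theorem HasDerivAt.matrix_apply {m n : Type*} [Fintype m] [Fintype n] {f : ℝ → Matrix m n ℝ}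
    {f' : Matrix m n ℝ} {t : ℝ} (h : HasDerivAt f f' t) (i : m) (j : n) :
    HasDerivAt (fun s => f s i j) (f' i j) t :=
  hasDerivAt_pi.mp (hasDerivAt_pi.mp h i) j

theorem hasDerivAt_conj5 (χ : TFG5) {γ : ℝ → TFG5} {η : TFG5} {t : ℝ} (h : HasDerivAt γ η t) :
    HasDerivAt (fun s => conj5 χ (γ s)) (conj5Lin χ η) t := by
  have h_affine : (fun s => conj5 χ (γ s)) = fun s => conj5 χ 0 + conj5Lin χ (γ s) :=
    funext fun s => conj5_eq_add χ (γ s)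
  rw [h_affine]
  exact ((conj5Lin χ).toContinuousLinearMap.hasFDerivAt.comp_hasDerivAt t h).const_add _

theorem hasDerivAt_exp5_smul (ξ : V3 × V3 × V3 × V3 × V3) :
    HasDerivAt (fun t : ℝ => exp5 (t • ξ)) (hat5 ξ) 0 := by
  have hexp : HasDerivAt (fun t : ℝ => NormedSpace.exp (skew (t • ξ.1))) (skew ξ.1) 0 := by
    simpa only [skew_smul] using Matrix.hasDerivAt_exp_smul (skew ξ.1)
  have hneg (b : V3) : HasDerivAt (fun t : ℝ => nu (-(t • ξ.1)) *ᵥ (t • b)) b 0 := by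
    simpa [smul_neg] using hasDerivAt_nu_smul_mulVec_smul (-ξ.1) b
  exact hexp.prodMk ((hasDerivAt_nu_smul_mulVec_smul ξ.1 ξ.2.1).prodMk
    ((hasDerivAt_nu_smul_mulVec_smul ξ.1 ξ.2.2.1).prodMk
      ((hneg ξ.2.2.2.1).prodMk (hneg ξ.2.2.2.2))))

/-- For a TFG element `χ = (R,v,p,b^a,b^ω)`, conjugation `g ↦ χ • g • χ⁻¹` is a
group automorphism of the TFG with gyroscope bias, and its differential at the
identity (tangent directions parametrized through `exp`) is the block matrix
`Ad_χ` with diagonal blocks `R` and first block column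
`(R; (v)× R; (p)× R; R (b^a)×; R (b^ω)×)`, all other blocks zero. -/
theorem conj5_automorphism_and_differential (χ : TFG5) (hχ : IsSO3 χ.1) :
    (Function.Bijective (conj5 χ) ∧
      ∀ g h : TFG5, conj5 χ (mul5 g h) = mul5 (conj5 χ g) (conj5 χ h)) ∧
    ∀ ξ : V3 × V3 × V3 × V3 × V3,
      (∀ i j : Fin 3, HasDerivAt (fun t : ℝ => (conj5 χ (exp5 (t • ξ))).1 i j)
        (skew (χ.1 *ᵥ ξ.1) i j) 0) ∧
      HasDerivAt (fun t : ℝ => (conj5 χ (exp5 (t • ξ))).2.1)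
        (skew χ.2.1 *ᵥ (χ.1 *ᵥ ξ.1) + χ.1 *ᵥ ξ.2.1) 0 ∧
      HasDerivAt (fun t : ℝ => (conj5 χ (exp5 (t • ξ))).2.2.1)
        (skew χ.2.2.1 *ᵥ (χ.1 *ᵥ ξ.1) + χ.1 *ᵥ ξ.2.2.1) 0 ∧
      HasDerivAt (fun t : ℝ => (conj5 χ (exp5 (t • ξ))).2.2.2.1)
        (χ.1 *ᵥ (skew χ.2.2.2.1 *ᵥ ξ.1) + χ.1 *ᵥ ξ.2.2.2.1) 0 ∧
      HasDerivAt (fun t : ℝ => (conj5 χ (exp5 (t • ξ))).2.2.2.2)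
        (χ.1 *ᵥ (skew χ.2.2.2.2 *ᵥ ξ.1) + χ.1 *ᵥ ξ.2.2.2.2) 0 := by
  refine ⟨⟨conj5_bijective hχ.1, conj5_mul5 hχ.1⟩, fun ξ => ?_⟩
  have h := hasDerivAt_conj5 χ (hasDerivAt_exp5_smul ξ)
  rw [conj5Lin_hat5 hχ] at h
  exact ⟨h.fst.matrix_apply, h.snd.fst, h.snd.snd.fst, h.snd.snd.snd.fst, h.snd.snd.snd.snd⟩

end Differential
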